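/- For the quaternion group Q₈ acting by left multiplication, the multiplicity of the trivial representation in D^{(j,j)} takes the values 1, 0, 10, 7, 27, 22, 52, 45, 85 for integer j = 0, 1, ..., 8. -/
import Mathlib


open Complex Real

/-- The character of the spin-`j` irreducible representation of `SU(2)` at an
element of rotation angle `φ`, parametrized by `n = 2j`. -/
noncomputable def chi (n : ℕ) (φ : ℝ) : ℂ :=
  ∑ k ∈ Finset.range (n + 1), Complex.exp (Complex.I * ((k : ℂ) - (n : ℂ) / 2) * φ)

/-- The multiplicity of the trivial representation of `Q₈` (acting by left
multiplication) in `D^{(j,j)}`, `n = 2j`: the average of the characters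
`χ^j(g_L)·(2j+1)` over the eight elements of `Q₈` (`±1` have angles `0, 2π`;
`±i, ±j, ±k` have angle `π`). -/
noncomputable def mQ (n : ℕ) : ℂ :=
  (1 / 8) * (chi n 0 + chi n (2 * π) + 6 * chi n π) * (n + 1)

lemma chi_zero (n : ℕ) : chi n 0 = n + 1 := by
  simp [chi]

lemma chi_two_pi (m : ℕ) : chi (2 * m) (2 * π) = 2 * m + 1 := by
  unfold chi
  simp only [Complex.ofReal_mul, Complex.ofReal_ofNat]
  have key : ∀ k ∈ Finset.range (2 * m + 1),
      Complex.exp (Complex.I * ((k : ℂ) - (2 * m : ℕ) / 2) * (2 * (π : ℂ))) = 1 := by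
    intro k _
    have h := Complex.exp_int_mul_two_pi_mul_I ((k : ℤ) - m)
    rw [← h]
    congr 1
    push_cast
    ring
  rw [Finset.sum_congr rfl key, Finset.sum_const, Finset.card_range]
  ring

lemma chi_pi (m : ℕ) : chi (2 * m) π = (-1) ^ m := by
  unfold chi
  have key : ∀ k ∈ Finset.range (2 * m + 1),
      Complex.exp (Complex.I * ((k : ℂ) - (2 * m : ℕ) / 2) * π)
        = (-1 : ℂ) ^ (k : ℤ) * (-1 : ℂ) ^ m := by
    intro k _
    have h1 : Complex.I * ((k : ℂ) - (2 * m : ℕ) / 2) * π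
        = ((k : ℤ) - m : ℤ) * (π * Complex.I) := by push_cast; ring
    rw [h1, Complex.exp_int_mul, Complex.exp_pi_mul_I, zpow_sub₀ (by norm_num), div_eq_mul_inv]
    have : ((-1 : ℂ) ^ (m : ℤ))⁻¹ = (-1 : ℂ) ^ m := by
      rw [← inv_zpow, inv_neg, inv_one, zpow_natCast]
    rw [this]
  rw [Finset.sum_congr rfl key, ← Finset.sum_mul]
  have : ∑ k ∈ Finset.range (2 * m + 1), (-1 : ℂ) ^ (k : ℤ)
      = ∑ k ∈ Finset.range (2 * m + 1), (-1 : ℂ) ^ k := by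
    refine Finset.sum_congr rfl fun k _ => by rw [zpow_natCast]
  rw [this, neg_one_geom_sum]
  simp [Nat.even_add_one, parity_simps]

lemma mQ_formula (m : ℕ) :
    mQ (2 * m) = (1 / 8) * ((2 * m + 1) + (2 * m + 1) + 6 * (-1 : ℂ) ^ m) * (2 * m + 1) := by
  rw [mQ, chi_zero, chi_two_pi, chi_pi]
  push_cast
  ring

/-- For `Q₈` acting by left multiplication, the multiplicity of the trivial
representation in `D^{(j,j)}` takes the values `1, 0, 10, 7, 27, 22, 52, 45, 85`
for integer `j = 0, 1, …, 8`. -/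
theorem multiplicity_trivial_Q8_values :
    mQ 0 = 1 ∧ mQ 2 = 0 ∧ mQ 4 = 10 ∧ mQ 6 = 7 ∧ mQ 8 = 27 ∧
    mQ 10 = 22 ∧ mQ 12 = 52 ∧ mQ 14 = 45 ∧ mQ 16 = 85 := by
  have h0 := mQ_formula 0
  have h1 := mQ_formula 1
  have h2 := mQ_formula 2
  have h3 := mQ_formula 3
  have h4 := mQ_formula 4
  have h5 := mQ_formula 5
  have h6 := mQ_formula 6
  have h7 := mQ_formula 7
  have h8 := mQ_formula 8
  norm_num at h0 h1 h2 h3 h4 h5 h6 h7 h8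
  exact ⟨h0, h1, h2, h3, h4, h5, h6, h7, h8⟩
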